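/- arXiv:2007.14339 — 5 statements merged into one kernel-verified Lean document; each statement's English description precedes it below -/
import Mathlib

section
/- If at least one part of the complete bipartite graph K_{m,n} has odd cardinality (m odd or n odd), then K_{m,n} admits no satisfactory partition. -/
/-!
A left vertex of `K_{m,n}` is adjacent exactly to the right vertices, so a left vertex in `V₁`
forces `V₁` to contain at least half of the right side, and a left vertex outside `V₁` at most
half. If `n` is odd, exactly half is impossible, so all left vertices lie in one part; a right
vertex in the other part then has all of its `m ≥ 1` neighbours across the partition. The case
`m` odd follows by exchanging the two sides.
-/

open Classical Finset

/-- `dIn G S v` is the number of neighbours of `v` lying in `S`. -/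
noncomputable def dIn {V : Type*} [Fintype V] (G : SimpleGraph V) (S : Finset V) (v : V) : ℕ :=
  (Finset.univ.filter (fun u => G.Adj v u ∧ u ∈ S)).card

/-- `(V1, V1ᶜ)` is a satisfactory partition: both parts nonempty and every vertex has at
least as many neighbours in its own part as in the other part. -/
def IsSatPartition {V : Type*} [Fintype V] [DecidableEq V]
    (G : SimpleGraph V) (V1 : Finset V) : Prop :=
  V1.Nonempty ∧ V1ᶜ.Nonempty ∧
    (∀ v ∈ V1, dIn G V1ᶜ v ≤ dIn G V1 v) ∧
    (∀ v ∈ V1ᶜ, dIn G V1 v ≤ dIn G V1ᶜ v)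

lemma IsSatPartition.compl {V : Type*} [Fintype V] [DecidableEq V] {G : SimpleGraph V}
    {S : Finset V} (h : IsSatPartition G S) : IsSatPartition G Sᶜ := by
  obtain ⟨hS, hSc, hin, hout⟩ := h
  rw [IsSatPartition, compl_compl]
  exact ⟨hSc, hS, hout, hin⟩

section Iso

variable {V W : Type*} [Fintype V] [Fintype W] {G : SimpleGraph V} {G' : SimpleGraph W}

lemma dIn_map_iso (e : G ≃g G') (S : Finset V) (v : V) :
    dIn G' (S.map e.toEquiv.toEmbedding) (e v) = dIn G S v := by
  rw [dIn, dIn, ← card_map e.toEquiv.toEmbedding]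
  congr 1
  ext u
  obtain ⟨u, rfl⟩ := e.toEquiv.surjective u
  simp only [mem_filter, mem_univ, true_and, mem_map_equiv, Equiv.symm_apply_apply]
  simp only [RelIso.coe_fn_toEquiv, SimpleGraph.Iso.map_adj_iff]

lemma IsSatPartition.map_iso [DecidableEq V] [DecidableEq W] {S : Finset V}
    (h : IsSatPartition G S) (e : G ≃g G') : IsSatPartition G' (S.map e.toEquiv.toEmbedding) := by
  have map_compl : (S.map e.toEquiv.toEmbedding)ᶜ = Sᶜ.map e.toEquiv.toEmbedding := by
    ext u
    obtain ⟨u, rfl⟩ := e.surjective u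
    simp
  obtain ⟨hS, hSc, hin, hout⟩ := h
  refine ⟨hS.map, map_compl ▸ hSc.map, ?_, ?_⟩ <;>
    simp only [map_compl, mem_map, forall_exists_index, and_imp, forall_apply_eq_imp_iff₂] <;>
    intro v hv
  · simpa only [Equiv.coe_toEmbedding, RelIso.coe_fn_toEquiv, dIn_map_iso] using hin v hv
  · simpa only [Equiv.coe_toEmbedding, RelIso.coe_fn_toEquiv, dIn_map_iso] using hout v hv

end Iso

def SimpleGraph.completeBipartiteGraphComm (α β : Type*) :
    completeBipartiteGraph α β ≃g completeBipartiteGraph β α where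
  __ := Equiv.sumComm α β
  map_rel_iff' := by rintro (a | b) (a' | b') <;> simp

lemma Finset.toLeft_compl {α β : Type*} [Fintype α] [Fintype β] [DecidableEq α] [DecidableEq β]
    (u : Finset (α ⊕ β)) : uᶜ.toLeft = u.toLeftᶜ := by
  ext; simp

lemma Finset.toRight_compl {α β : Type*} [Fintype α] [Fintype β] [DecidableEq α] [DecidableEq β]
    (u : Finset (α ⊕ β)) : uᶜ.toRight = u.toRightᶜ := by
  ext; simp

section CompleteBipartite

variable {α β : Type*} [Fintype α] [Fintype β]

lemma dIn_completeBipartiteGraph_inl (S : Finset (α ⊕ β)) (a : α) :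
    dIn (completeBipartiteGraph α β) S (.inl a) = #S.toRight := by
  rw [dIn, ← S.toRight.card_map .inr]
  congr 1
  ext (a' | b) <;> simp

lemma dIn_completeBipartiteGraph_inr (S : Finset (α ⊕ β)) (b : β) :
    dIn (completeBipartiteGraph α β) S (.inr b) = #S.toLeft := by
  rw [dIn, ← S.toLeft.card_map .inl]
  congr 1
  ext (a | b') <;> simp

variable [DecidableEq α] [DecidableEq β] {S : Finset (α ⊕ β)}

lemma IsSatPartition.inl_mem_of_card_lt (h : IsSatPartition (completeBipartiteGraph α β) S)
    (hS : Fintype.card β < 2 * #S.toRight) (a : α) : .inl a ∈ S := by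
  by_contra ha
  have := h.2.2.2 (.inl a) (mem_compl.2 ha)
  rw [dIn_completeBipartiteGraph_inl, dIn_completeBipartiteGraph_inl, toRight_compl,
    card_compl] at this
  omega

lemma IsSatPartition.isEmpty_of_card_lt (h : IsSatPartition (completeBipartiteGraph α β) S)
    (hS : Fintype.card β < 2 * #S.toRight) : IsEmpty α := by
  have hleft := h.inl_mem_of_card_lt hS
  obtain ⟨v | b, hv⟩ := h.2.1
  · exact absurd (hleft v) (mem_compl.1 hv)
  · have hS_toLeft : S.toLeft = univ := eq_univ_of_forall fun a => mem_toLeft.2 (hleft a)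
    have hb := h.2.2.2 (.inr b) hv
    rwa [dIn_completeBipartiteGraph_inr, dIn_completeBipartiteGraph_inr, toLeft_compl, hS_toLeft,
      compl_univ, card_empty, card_univ, Nat.le_zero, Fintype.card_eq_zero_iff] at hb

theorem not_isSatPartition_completeBipartiteGraph_of_odd_card [Nonempty α]
    (hβ : Odd (Fintype.card β)) (S : Finset (α ⊕ β)) :
    ¬ IsSatPartition (completeBipartiteGraph α β) S := by
  intro h
  have hS_le : #S.toRight ≤ Fintype.card β := card_le_univ _
  have hSc : #Sᶜ.toRight = Fintype.card β - #S.toRight := by rw [toRight_compl, card_compl]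
  obtain ⟨k, hk⟩ := hβ
  rcases lt_or_gt_of_ne (show Fintype.card β ≠ 2 * #S.toRight by omega) with hlt | hgt
  · exact not_isEmpty_of_nonempty α (h.isEmpty_of_card_lt hlt)
  · exact not_isEmpty_of_nonempty α (h.compl.isEmpty_of_card_lt (by omega))

end CompleteBipartite

/-- If at least one part of K_{m,n} has odd cardinality, then K_{m,n} admits no
satisfactory partition. -/
theorem completeBipartite_odd_no_satisfactory_partition (m n : ℕ)
    (hm : 1 ≤ m) (hn : 1 ≤ n) (hodd : Odd m ∨ Odd n) :
    ¬ ∃ V1 : Finset (Fin m ⊕ Fin n),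
        IsSatPartition (completeBipartiteGraph (Fin m) (Fin n)) V1 := by
  rintro ⟨V1, h⟩
  rcases hodd with hm_odd | hn_odd
  · have : Nonempty (Fin n) := Fin.pos_iff_nonempty.1 hn
    exact not_isSatPartition_completeBipartiteGraph_of_odd_card (by simpa using hm_odd) _
      (h.map_iso (SimpleGraph.completeBipartiteGraphComm _ _))
  · have : Nonempty (Fin m) := Fin.pos_iff_nonempty.1 hm
    exact not_isSatPartition_completeBipartiteGraph_of_odd_card (by simpa using hn_odd) _ h
end

section
/- Let u and v be two adjacent vertices of a graph G with N(u)∖{v} = N(v)∖{u} (i.e., u and v have the same type and form a clique pair). Then in any satisfactory partition (V₁,V₂) of G, the vertices u and v lie in the same part. -/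
open Classical Finset

/-! Adjacent twins `u, v` have the same closed neighbourhood, so a part containing `u` but not `v`
gives `v` exactly one more neighbour in it than `u` has, and the complement gives `u` one more
than `v`. Satisfaction at `u` and at `v` then yields `d + 2 ≤ d` for a suitable count `d`. -/

section Twins

variable {V : Type*} {G : SimpleGraph V} {u v : V}

lemma adj_iff_adj_of_neighborSet_sdiff_eq
    (htype : G.neighborSet u \ {v} = G.neighborSet v \ {u}) {w : V} (hwu : w ≠ u) (hwv : w ≠ v) :
    G.Adj u w ↔ G.Adj v w := by
  simpa [hwu, hwv] using Set.ext_iff.mp htype w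

lemma dIn_eq_dIn_add_one [Fintype V] (hadj : G.Adj u v)
    (htype : G.neighborSet u \ {v} = G.neighborSet v \ {u})
    {S : Finset V} (hu : u ∈ S) (hv : v ∉ S) :
    dIn G S v = dIn G S u + 1 := by
  have hsplit : univ.filter (fun w => G.Adj v w ∧ w ∈ S) =
      insert u (univ.filter (fun w => G.Adj u w ∧ w ∈ S)) := by
    ext w
    by_cases hwu : w = u
    · subst hwu; simp [hadj.symm, hu]
    by_cases hwv : w = v
    · subst hwv; simp [hv, hadj.ne']
    simp [hwu, adj_iff_adj_of_neighborSet_sdiff_eq htype hwu hwv]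
  rw [dIn, dIn, hsplit, card_insert_of_notMem (by simp)]

lemma mem_of_mem_of_isSatPartition [Fintype V] [DecidableEq V] {V1 : Finset V}
    (hsat : IsSatPartition G V1) (hadj : G.Adj u v)
    (htype : G.neighborSet u \ {v} = G.neighborSet v \ {u}) (hu : u ∈ V1) : v ∈ V1 := by
  by_contra hv
  have hmore_v := dIn_eq_dIn_add_one hadj htype hu hv
  have hmore_u := dIn_eq_dIn_add_one hadj.symm htype.symm (mem_compl.2 hv) (by simpa using hu)
  have hsat_u := hsat.2.2.1 u hu
  have hsat_v := hsat.2.2.2 v (mem_compl.2 hv)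
  omega

end Twins

/-- Two adjacent same-type vertices lie in the same part of any satisfactory partition. -/
theorem adjacent_same_type_same_part {V : Type*} [Fintype V] [DecidableEq V]
    (G : SimpleGraph V) (u v : V) (hadj : G.Adj u v)
    (htype : G.neighborSet u \ {v} = G.neighborSet v \ {u})
    (V1 : Finset V) (hsat : IsSatPartition G V1) :
    (u ∈ V1 ↔ v ∈ V1) :=
  ⟨mem_of_mem_of_isSatPartition hsat hadj htype,
    mem_of_mem_of_isSatPartition hsat hadj.symm htype.symm⟩
end

section
/- Let C be a set of pairwise adjacent vertices in a graph G such that all vertices of C have the same type (N(u)∖{v} = N(v)∖{u} for all u,v ∈ C). Then in any satisfactory partition (V₁,V₂) of G, C is entirely contained in V₁ or entirely contained in V₂. -/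
open Classical Finset

/-!
If adjacent twins `u ∉ V₁` and `v ∈ V₁` existed, `u` would see exactly one more vertex of `V₁`
than `v` (namely `v`), and `v` exactly one more vertex of `V₁ᶜ` than `u`. Adding the satisfactory
inequalities `d_{V₁ᶜ}(v) ≤ d_{V₁}(v)` and `d_{V₁}(u) ≤ d_{V₁ᶜ}(u)` then gives `2 ≤ 0`.
-/

namespace SimpleGraph

variable {V : Type*} {G : SimpleGraph V} {u v : V}

lemma adj_iff_adj_of_neighborSet_sdiff_eq
    (htwin : G.neighborSet u \ {v} = G.neighborSet v \ {u}) {x : V} (hxu : x ≠ u)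
    (hxv : x ≠ v) : G.Adj u x ↔ G.Adj v x := by
  simpa [hxu, hxv] using Set.ext_iff.mp htwin x

lemma dIn_eq_dIn_add_one_of_twins [Fintype V] (S : Finset V) (huv : G.Adj u v)
    (htwin : G.neighborSet u \ {v} = G.neighborSet v \ {u}) (hv : v ∈ S) (hu : u ∉ S) :
    dIn G S u = dIn G S v + 1 := by
  have hnbrs : univ.filter (fun x => G.Adj u x ∧ x ∈ S)
      = insert v (univ.filter (fun x => G.Adj v x ∧ x ∈ S)) := by
    ext x
    simp only [mem_insert, mem_filter, mem_univ, true_and]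
    by_cases hxv : x = v
    · subst hxv
      simp [huv, hv]
    · by_cases hxS : x ∈ S
      · have hxu : x ≠ u := by rintro rfl; exact hu hxS
        simp [hxv, hxS, adj_iff_adj_of_neighborSet_sdiff_eq htwin hxu hxv]
      · simp [hxS, hxv]
  rw [dIn, dIn, hnbrs, card_insert_of_notMem (by simp)]

lemma not_isSatPartition_of_twins_split [Fintype V] [DecidableEq V] {V1 : Finset V}
    (huv : G.Adj u v) (htwin : G.neighborSet u \ {v} = G.neighborSet v \ {u})
    (hu : u ∉ V1) (hv : v ∈ V1) : ¬ IsSatPartition G V1 := by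
  rintro ⟨-, -, hsat₁, hsat₂⟩
  have hu' : u ∈ V1ᶜ := mem_compl.mpr hu
  have hgain₁ := dIn_eq_dIn_add_one_of_twins V1 huv htwin hv hu
  have hgain₂ := dIn_eq_dIn_add_one_of_twins V1ᶜ huv.symm htwin.symm hu'
    (by simpa using hv)
  have hv_sat := hsat₁ v hv
  have hu_sat := hsat₂ u hu'
  omega

end SimpleGraph

/-- A clique type class lies entirely in one part of any satisfactory partition. -/
theorem clique_type_class_not_split {V : Type*} [Fintype V] [DecidableEq V]
    (G : SimpleGraph V) (C : Finset V)
    (hclique : ∀ u ∈ C, ∀ v ∈ C, u ≠ v → G.Adj u v)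
    (htype : ∀ u ∈ C, ∀ v ∈ C, G.neighborSet u \ {v} = G.neighborSet v \ {u})
    (V1 : Finset V) (hsat : IsSatPartition G V1) :
    C ⊆ V1 ∨ C ⊆ V1ᶜ := by
  by_contra! hsplit
  obtain ⟨u, huC, hu⟩ := not_subset.mp hsplit.1
  obtain ⟨v, hvC, hv⟩ := not_subset.mp hsplit.2
  rw [mem_compl, not_not] at hv
  have huv : u ≠ v := by rintro rfl; exact hu hv
  exact SimpleGraph.not_isSatPartition_of_twins_split (hclique u huC v hvC huv)
    (htype u huC v hvC) hu hv hsat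
end

section
/- Let G be a graph with type classes as above, and let v belong to an independent type class C_j with v ∈ V₁. Then v is satisfied if and only if Σ_{i: C_i ∈ N_H(C_j) ∩ I₁} n_i + Σ_{i: C_i ∈ N_H(C_j) ∩ I₃} 2x_i ≥ Σ_{i: C_i ∈ N_H(C_j) ∩ I₂} n_i + Σ_{i: C_i ∈ N_H(C_j) ∩ I₃} n_i, where x_i = |V₁ ∩ C_i| and n_i = |C_i|. -/
open Classical Finset

/-- Classes `i` and `i'` are completely joined in `G`. -/
def ClassesJoined {V : Type*} {k : ℕ} (G : SimpleGraph V) (C : Fin k → Finset V) (i i' : Fin k) : Prop :=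
  ∀ u ∈ C i, ∀ w ∈ C i', G.Adj u w

/-- The closed neighbourhood of class `j` in the type graph `H`. -/
noncomputable def NHclosed {V : Type*} {k : ℕ} (G : SimpleGraph V) (C : Fin k → Finset V)
    (j : Fin k) : Finset (Fin k) :=
  Finset.univ.filter (fun i => i = j ∨ ClassesJoined G C i j)

/-- The open neighbourhood of class `j` in the type graph `H`. -/
noncomputable def NHopen {V : Type*} {k : ℕ} (G : SimpleGraph V) (C : Fin k → Finset V)
    (j : Fin k) : Finset (Fin k) :=
  Finset.univ.filter (fun i => i ≠ j ∧ ClassesJoined G C i j)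

/-- Classes entirely contained in `V1`. -/
noncomputable def I1 {V : Type*} [Fintype V] {k : ℕ} (C : Fin k → Finset V) (V1 : Finset V) :
    Finset (Fin k) :=
  Finset.univ.filter (fun i => C i ⊆ V1)

/-- Classes entirely contained in `V1ᶜ` (i.e. in `V2`). -/
noncomputable def I2 {V : Type*} [Fintype V] [DecidableEq V] {k : ℕ} (C : Fin k → Finset V)
    (V1 : Finset V) : Finset (Fin k) :=
  Finset.univ.filter (fun i => C i ⊆ V1ᶜ)

/-- Classes meeting both parts. -/
noncomputable def I3 {V : Type*} [Fintype V] [DecidableEq V] {k : ℕ} (C : Fin k → Finset V)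
    (V1 : Finset V) : Finset (Fin k) :=
  Finset.univ.filter (fun i => (C i ∩ V1).Nonempty ∧ (C i ∩ V1ᶜ).Nonempty)

/-! Twins in a class have the same neighbours outside it, so, `C j` being independent, the
neighbourhood of `v` is the union of the classes joined to `C j`. Counting class by class,
`d_{V₁}(v) - d_{V₂}(v)` is the sum over these classes of `x_i - (n_i - x_i)`, which equals `n_i`
on `I₁`, `-n_i` on `I₂` and `2x_i - n_i` on `I₃` (an empty class lies in both `I₁` and `I₂` and
contributes `0` either way). -/

section Counting

variable {α : Type*} [Fintype α] [DecidableEq α]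

lemma subset_iff_card_inter_compl_eq_zero {s T : Finset α} : s ⊆ T ↔ #(s ∩ Tᶜ) = 0 := by
  rw [card_eq_zero, ← sdiff_eq_inter_compl, sdiff_eq_empty_iff_subset]

lemma card_inter_compl_add_ite_eq (s T : Finset α) :
    #(s ∩ Tᶜ) + ((if s ⊆ T then #s else 0)
        + (if (s ∩ T).Nonempty ∧ (s ∩ Tᶜ).Nonempty then 2 * #(s ∩ T) else 0))
      = #(s ∩ T) + ((if s ⊆ Tᶜ then #s else 0)
        + (if (s ∩ T).Nonempty ∧ (s ∩ Tᶜ).Nonempty then #s else 0)) := by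
  have hcard : #(s ∩ T) + #(s ∩ Tᶜ) = #s := by
    rw [← sdiff_eq_inter_compl]
    exact card_inter_add_card_sdiff s T
  have hsub_compl : s ⊆ Tᶜ ↔ #(s ∩ T) = 0 := by
    rw [subset_iff_card_inter_compl_eq_zero, compl_compl]
  simp only [subset_iff_card_inter_compl_eq_zero, hsub_compl, ← card_pos]
  split_ifs <;> omega

end Counting

section Classes

lemma pairwiseDisjoint_of_existsUnique {V : Type*} {k : ℕ} {C : Fin k → Finset V}
    (hpart : ∀ v : V, ∃! i, v ∈ C i) (s : Set (Fin k)) : s.PairwiseDisjoint C := by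
  intro i _ i' _ hne
  refine disjoint_left.mpr fun a hai hai' => hne ?_
  exact (hpart a).unique hai hai'

variable {V : Type*} [Fintype V] [DecidableEq V] {k : ℕ} (C : Fin k → Finset V) (V1 : Finset V)

lemma sum_card_inter_compl_add_sum_I1_add_sum_I3 (s : Finset (Fin k)) :
    ∑ i ∈ s, #(C i ∩ V1ᶜ)
        + (∑ i ∈ s ∩ I1 C V1, #(C i) + ∑ i ∈ s ∩ I3 C V1, 2 * #(C i ∩ V1))
      = ∑ i ∈ s, #(C i ∩ V1)
        + (∑ i ∈ s ∩ I2 C V1, #(C i) + ∑ i ∈ s ∩ I3 C V1, #(C i)) := by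
  simp only [← sum_ite_mem, ← sum_add_distrib, I1, I2, I3, mem_filter, mem_univ, true_and]
  exact sum_congr rfl fun i _ => card_inter_compl_add_ite_eq (C i) V1

end Classes

namespace SimpleGraph

variable {V : Type*} {G : SimpleGraph V}

lemma adj_of_neighborSet_sdiff_eq {u w x : V}
    (htwin : G.neighborSet u \ {w} = G.neighborSet w \ {u}) (hux : G.Adj u x) (hxw : x ≠ w) :
    G.Adj w x := by
  have hx : x ∈ G.neighborSet u \ {w} := ⟨hux, hxw⟩
  rw [htwin] at hx
  exact hx.1

end SimpleGraph

section TypeClasses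

open SimpleGraph

variable {V : Type*} {G : SimpleGraph V} {k : ℕ} {C : Fin k → Finset V}

lemma classesJoined_of_adj
    (htype : ∀ i, ∀ u ∈ C i, ∀ w ∈ C i, G.neighborSet u \ {w} = G.neighborSet w \ {u})
    {i j : Fin k} (hdisj : Disjoint (C i) (C j)) {u v : V} (hu : u ∈ C i) (hv : v ∈ C j)
    (hvu : G.Adj v u) : ClassesJoined G C i j := by
  intro a ha b hb
  have hva : G.Adj v a :=
    (adj_of_neighborSet_sdiff_eq (htype i u hu a ha) hvu.symm
      fun hva => Finset.disjoint_left.mp hdisj (hva ▸ ha) hv).symm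
  exact (adj_of_neighborSet_sdiff_eq (htype j v hv b hb) hva
    fun hab => Finset.disjoint_left.mp hdisj ha (hab ▸ hb)).symm

lemma adj_iff_exists_mem_NHopen (hpart : ∀ v : V, ∃! i, v ∈ C i)
    (htype : ∀ i, ∀ u ∈ C i, ∀ w ∈ C i, G.neighborSet u \ {w} = G.neighborSet w \ {u})
    {j : Fin k} (hindep : ∀ u ∈ C j, ∀ w ∈ C j, ¬ G.Adj u w) {v : V} (hv : v ∈ C j) (u : V) :
    G.Adj v u ↔ ∃ i ∈ NHopen G C j, u ∈ C i := by
  simp only [NHopen, mem_filter, mem_univ, true_and]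
  constructor
  · intro hvu
    obtain ⟨i, hu, -⟩ := hpart u
    have hij : i ≠ j := by
      rintro rfl
      exact hindep v hv u hu hvu
    exact ⟨i, ⟨hij, classesJoined_of_adj htype
      (pairwiseDisjoint_of_existsUnique hpart Set.univ trivial trivial hij) hu hv hvu⟩, hu⟩
  · rintro ⟨i, ⟨-, hjoin⟩, hu⟩
    exact (hjoin u hu v hv).symm

variable [Fintype V] [DecidableEq V]

lemma dIn_eq_sum_card_inter {v : V} {s : Finset (Fin k)}
    (hdisj : (s : Set (Fin k)).PairwiseDisjoint C)
    (hadj : ∀ u, G.Adj v u ↔ ∃ i ∈ s, u ∈ C i) (S : Finset V) :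
    dIn G S v = ∑ i ∈ s, #(C i ∩ S) := by
  rw [dIn, ← card_biUnion (hdisj.mono_on fun i _ => inter_subset_left)]
  congr 1
  ext u
  simp only [mem_filter, mem_univ, true_and, mem_biUnion, mem_inter, hadj u]
  tauto

end TypeClasses

theorem independent_class_satisfied_iff_general {V : Type*} [Fintype V] [DecidableEq V]
    (G : SimpleGraph V) (k : ℕ) (C : Fin k → Finset V)
    (hpart : ∀ v : V, ∃! i, v ∈ C i)
    (htype : ∀ i, ∀ u ∈ C i, ∀ w ∈ C i, G.neighborSet u \ {w} = G.neighborSet w \ {u})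
    (V1 : Finset V) (j : Fin k)
    (hindep : ∀ u ∈ C j, ∀ w ∈ C j, ¬ G.Adj u w)
    (v : V) (hv : v ∈ C j) :
    dIn G V1ᶜ v ≤ dIn G V1 v ↔
      (∑ i ∈ NHopen G C j ∩ I2 C V1, (C i).card)
        + (∑ i ∈ NHopen G C j ∩ I3 C V1, (C i).card)
      ≤ (∑ i ∈ NHopen G C j ∩ I1 C V1, (C i).card)
        + (∑ i ∈ NHopen G C j ∩ I3 C V1, 2 * (C i ∩ V1).card) := by
  have hdIn := dIn_eq_sum_card_inter (pairwiseDisjoint_of_existsUnique hpart _)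
    (adj_iff_exists_mem_NHopen hpart htype hindep hv)
  have hbalance := sum_card_inter_compl_add_sum_I1_add_sum_I3 C V1 (NHopen G C j)
  rw [hdIn, hdIn]
  omega

/-- Characterization of satisfaction for a vertex of an independent type class lying in V₁. -/
theorem independent_class_satisfied_iff {V : Type*} [Fintype V] [DecidableEq V]
    (G : SimpleGraph V) (k : ℕ) (C : Fin k → Finset V)
    (hpart : ∀ v : V, ∃! i, v ∈ C i)
    (htype : ∀ i, ∀ u ∈ C i, ∀ w ∈ C i, G.neighborSet u \ {w} = G.neighborSet w \ {u})
    (V1 : Finset V) (j : Fin k)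
    (hindep : ∀ u ∈ C j, ∀ w ∈ C j, ¬ G.Adj u w)
    (v : V) (hv : v ∈ C j) (hv1 : v ∈ V1) :
    dIn G V1ᶜ v ≤ dIn G V1 v ↔
      (∑ i ∈ NHopen G C j ∩ I2 C V1, (C i).card)
        + (∑ i ∈ NHopen G C j ∩ I3 C V1, (C i).card)
      ≤ (∑ i ∈ NHopen G C j ∩ I1 C V1, (C i).card)
        + (∑ i ∈ NHopen G C j ∩ I3 C V1, 2 * (C i ∩ V1).card) :=
  independent_class_satisfied_iff_general G k C hpart htype V1 j hindep v hv
end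

section
/- In the gadget replacing a complementary vertex pair (a,b): add new vertices △ and □ with edges (a,△), (a,□), (b,△), (b,□). If (V₁′,V₂′) is a satisfactory partition of the augmented graph with △ ∈ V₁′ and □ ∈ V₂′, then exactly one of a, b belongs to V₁′. -/
open Classical Finset

/-! A satisfied vertex that has any neighbour at all has one in its own part; applied to the
degree-two vertices `t ∈ V1` and `s ∈ V1ᶜ`, this puts one of `a, b` on each side. -/

section

variable {V : Type*} [Fintype V] {G : SimpleGraph V}

theorem dIn_pos_iff {S : Finset V} {v : V} : 0 < dIn G S v ↔ ∃ u ∈ S, G.Adj v u := by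
  simp only [dIn, Finset.card_pos, Finset.Nonempty, Finset.mem_filter, Finset.mem_univ,
    true_and]
  exact exists_congr fun u => and_comm

theorem exists_adj_mem_of_dIn_compl_le [DecidableEq V] {S : Finset V} {v w : V}
    (h : dIn G Sᶜ v ≤ dIn G S v) (hvw : G.Adj v w) : ∃ u ∈ S, G.Adj v u := by
  by_cases hw : w ∈ S
  · exact ⟨w, hw, hvw⟩
  · have hcompl : 0 < dIn G Sᶜ v := dIn_pos_iff.2 ⟨w, Finset.mem_compl.2 hw, hvw⟩
    exact dIn_pos_iff.1 (hcompl.trans_le h)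

end

/-- In the complementary-pair gadget (△ adjacent exactly to a,b and □ adjacent exactly
to a,b), any satisfactory partition with △ ∈ V₁ and □ ∈ V₂ contains exactly one of a, b
in V₁. -/
theorem gadget_exactly_one {W : Type*} [Fintype W] [DecidableEq W]
    (G' : SimpleGraph W) (a b t s : W)
    (ht : G'.neighborSet t = {a, b}) (hs : G'.neighborSet s = {a, b})
    (V1 : Finset W) (hsat : IsSatPartition G' V1)
    (htV1 : t ∈ V1) (hsV2 : s ∈ V1ᶜ) :
    Xor' (a ∈ V1) (b ∈ V1) := by
  obtain ⟨-, -, hV1, hV2⟩ := hsat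
  have hadj_t : ∀ {u}, G'.Adj t u ↔ u = a ∨ u = b := by
    intro u; rw [← SimpleGraph.mem_neighborSet, ht]; rfl
  have hadj_s : ∀ {u}, G'.Adj s u ↔ u = a ∨ u = b := by
    intro u; rw [← SimpleGraph.mem_neighborSet, hs]; rfl
  obtain ⟨u, hu, htu⟩ :=
    exists_adj_mem_of_dIn_compl_le (hV1 t htV1) (hadj_t.2 (Or.inl rfl))
  obtain ⟨w, hw, hsw⟩ :=
    exists_adj_mem_of_dIn_compl_le (S := V1ᶜ) (by simpa only [compl_compl] using hV2 s hsV2)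
      (hadj_s.2 (Or.inl rfl))
  rw [Finset.mem_compl] at hw
  rcases hadj_t.1 htu with rfl | rfl <;> rcases hadj_s.1 hsw with rfl | rfl <;> tauto
end
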